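/- Let d ≥ 1 and let D ⊂ ℝ^d be a nonempty bounded open set. Let a, b > 0 and ϱ > −d satisfy a + ϱ + b > 0, and assume it is not the case that a = b = −ϱ. Then there exists a constant C = C(d, a, b, ϱ) such that for all x, y ∈ D with x ≠ y: ∫_D ∫_D |y−z|^{a−d} |z−w|^{ϱ} |w−x|^{b−d} dz dw ≤ C (diam(D))^{a+ϱ+b}. -/

import Mathlib

open MeasureTheory Metric
open scoped ENNReal NNReal

namespace DblRiesz

variable {d : ℕ}

local notation "E" => EuclideanSpace ℝ (Fin d)

lemma meas_cball (y : E) {r : ℝ} (hr : 0 ≤ r) :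
    volume (closedBall y r) = ENNReal.ofReal (r ^ (d : ℝ)) * volume (ball (0 : E) 1) := by
  rw [Measure.addHaar_closedBall _ _ hr, finrank_euclideanSpace_fin, Real.rpow_natCast]

lemma meas_singleton (hd : 1 ≤ d) (y : E) : volume ({y} : Set E) = 0 := by
  have h : ({y} : Set E) = closedBall y 0 := closedBall_zero.symm
  rw [h, meas_cball y le_rfl]
  rw [Real.zero_rpow (by positivity), ENNReal.ofReal_zero, zero_mul]

lemma lint_diff_singleton (hd : 1 ≤ d) (f : E → ℝ≥0∞) (s : Set E) (p : E) :
    ∫⁻ z in s, f z ≤ ∫⁻ z in s \ {p}, f z := by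
  calc ∫⁻ z in s, f z ≤ ∫⁻ z in (s \ {p}) ∪ {p}, f z :=
        lintegral_mono_set (fun z hz => by
          by_cases h : z = p
          · exact Or.inr (by simp [h])
          · exact Or.inl ⟨hz, h⟩)
    _ ≤ (∫⁻ z in s \ {p}, f z) + ∫⁻ z in {p}, f z := lintegral_union_le _ _ _
    _ = ∫⁻ z in s \ {p}, f z := by
        rw [Measure.restrict_eq_zero.2 (meas_singleton hd p), lintegral_zero_measure, add_zero]

/-- Ball integral of `dist z y ^ γ`, `γ > -d`. -/
lemma lint_cball (hd : 1 ≤ d) {γ : ℝ} (hγ : -(d : ℝ) < γ) :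
    ∃ C : ℝ≥0∞, C ≠ ⊤ ∧ ∀ R : ℝ, 0 < R → ∀ y : E,
      ∫⁻ z in closedBall y R, ENNReal.ofReal (dist z y ^ γ) ≤
        C * ENNReal.ofReal (R ^ (γ + d)) := by
  have hγd : 0 < γ + d := by linarith
  rcases le_or_gt 0 γ with hγ0 | hγ0
  · refine ⟨volume (ball (0 : E) 1), measure_ball_lt_top.ne, fun R hR y => ?_⟩
    calc ∫⁻ z in closedBall y R, ENNReal.ofReal (dist z y ^ γ)
        ≤ ∫⁻ _ in closedBall y R, ENNReal.ofReal (R ^ γ) :=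
          setLIntegral_mono' measurableSet_closedBall fun z hz =>
            ENNReal.ofReal_le_ofReal (Real.rpow_le_rpow dist_nonneg (mem_closedBall.1 hz) hγ0)
      _ = ENNReal.ofReal (R ^ γ) * volume (closedBall y R) := setLIntegral_const _ _
      _ = volume (ball (0 : E) 1) * ENNReal.ofReal (R ^ (γ + d)) := by
          rw [meas_cball y hR.le, ← mul_assoc, ← ENNReal.ofReal_mul (by positivity),
            ← Real.rpow_add hR, mul_comm]
  · set mB := volume (ball (0 : E) 1) with hmB
    have h2 : (0 : ℝ) < 1 / 2 := by norm_num
    have hq1 : ((1 : ℝ) / 2) ^ (γ + d) < 1 :=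
      Real.rpow_lt_one h2.le (by norm_num) hγd
    set q : ℝ≥0∞ := ENNReal.ofReal (((1 : ℝ) / 2) ^ (γ + d)) with hq
    have hqlt : q < 1 := by
      rw [hq, ← ENNReal.ofReal_one]
      exact ENNReal.ofReal_lt_ofReal_iff_of_nonneg (by positivity) |>.2 hq1
    have hinv : (1 - q)⁻¹ ≠ ⊤ := by
      rw [ENNReal.inv_ne_top, ne_eq, tsub_eq_zero_iff_le, not_le]
      exact hqlt
    refine ⟨ENNReal.ofReal (((1 : ℝ) / 2) ^ γ) * (1 - q)⁻¹ * mB,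
      ENNReal.mul_ne_top (ENNReal.mul_ne_top ENNReal.ofReal_ne_top hinv)
        measure_ball_lt_top.ne, fun R hR y => ?_⟩
    set r : ℕ → ℝ := fun n => R * (1 / 2 : ℝ) ^ n with hr
    have hrpos : ∀ n, 0 < r n := fun n => by positivity
    set A : ℕ → Set E := fun n => closedBall y (r n) \ closedBall y (r (n + 1)) with hA
    have hcover : closedBall y R ⊆ {y} ∪ ⋃ n, A n := by
      intro z hz
      rcases eq_or_ne z y with h | h
      · exact Or.inl (by simp [h])
      right
      have hdz : 0 < dist z y := dist_pos.2 h
      have hle : dist z y ≤ R := mem_closedBall.1 hz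
      have hex : ∃ n : ℕ, r (n + 1) < dist z y := by
        obtain ⟨n, hn⟩ := exists_pow_lt_of_lt_one (div_pos hdz hR) (by norm_num : (1 : ℝ) / 2 < 1)
        refine ⟨n, ?_⟩
        have h1 : ((1 : ℝ) / 2) ^ (n + 1) < ((1 : ℝ) / 2) ^ n :=
          pow_lt_pow_right_of_lt_one₀ h2 (by norm_num) (by omega)
        have h2' : ((1 : ℝ) / 2) ^ n * R < dist z y := (lt_div_iff₀ hR).1 hn
        have h3 : r (n + 1) < R * ((1 : ℝ) / 2) ^ n := by
          simp only [hr]; nlinarith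
        nlinarith
      set n₀ := Nat.find hex with hn₀
      refine Set.mem_iUnion.2 ⟨n₀, ?_, ?_⟩
      · rw [mem_closedBall]
        rcases Nat.eq_zero_or_pos n₀ with h0 | h0
        · rw [h0]; simpa [hr] using hle
        · obtain ⟨m, hm⟩ := Nat.exists_eq_succ_of_ne_zero h0.ne'
          have := Nat.find_min hex (m := m) (by omega)
          rw [hm]
          push_neg at this
          exact this
      · simp only [mem_closedBall, not_le]
        exact Nat.find_spec hex
    have c1 : ∀ (m : ℕ) (e : ℝ), (r m) ^ e = R ^ e * ((1 : ℝ) / 2) ^ ((m : ℝ) * e) := by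
      intro m e
      simp only [hr]; rw [← Real.rpow_natCast ((1 : ℝ) / 2) m,
        Real.mul_rpow hR.le (Real.rpow_nonneg h2.le _), ← Real.rpow_mul h2.le]
    have merge : ∀ s t : ℝ, ((1 : ℝ) / 2) ^ s * ((1 : ℝ) / 2) ^ t = ((1 : ℝ) / 2) ^ (s + t) :=
      fun s t => (Real.rpow_add h2 s t).symm
    have key : ∀ n : ℕ, (r (n + 1)) ^ γ * (r n) ^ (d : ℝ) =
        (R ^ (γ + (d : ℝ)) * ((1 : ℝ) / 2) ^ γ) * (((1 : ℝ) / 2) ^ (γ + (d : ℝ))) ^ n := by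
      intro n
      have c2 : (((1 : ℝ) / 2) ^ (γ + (d : ℝ))) ^ n = ((1 : ℝ) / 2) ^ ((γ + (d : ℝ)) * n) := by
        rw [← Real.rpow_natCast (((1 : ℝ) / 2) ^ (γ + (d : ℝ))) n, ← Real.rpow_mul h2.le]
      rw [c1, c1, c2, Real.rpow_add hR]
      calc R ^ γ * ((1 : ℝ) / 2) ^ ((↑(n + 1) : ℝ) * γ) * (R ^ (d : ℝ) * ((1 : ℝ) / 2) ^ ((n : ℝ) * d))
          = (R ^ γ * R ^ (d : ℝ)) * (((1 : ℝ) / 2) ^ ((↑(n + 1) : ℝ) * γ) * ((1 : ℝ) / 2) ^ ((n : ℝ) * d)) := by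
            ring
        _ = (R ^ γ * R ^ (d : ℝ)) * ((1 : ℝ) / 2) ^ ((↑(n + 1) : ℝ) * γ + (n : ℝ) * d) := by
            rw [merge]
        _ = (R ^ γ * R ^ (d : ℝ)) * ((1 : ℝ) / 2) ^ (γ + (γ + (d : ℝ)) * (n : ℝ)) := by
            rw [show (↑(n + 1) : ℝ) * γ + (n : ℝ) * d = γ + (γ + (d : ℝ)) * (n : ℝ) from by
              push_cast; ring]
        _ = R ^ γ * R ^ (d : ℝ) * ((1 : ℝ) / 2) ^ γ * ((1 : ℝ) / 2) ^ ((γ + (d : ℝ)) * (n : ℝ)) := by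
            rw [← merge]; ring
    have hterm : ∀ n, ∫⁻ z in A n, ENNReal.ofReal (dist z y ^ γ) ≤
        ENNReal.ofReal ((r (n + 1)) ^ γ) * (ENNReal.ofReal ((r n) ^ (d : ℝ)) * mB) := by
      intro n
      calc ∫⁻ z in A n, ENNReal.ofReal (dist z y ^ γ)
          ≤ ∫⁻ _ in A n, ENNReal.ofReal ((r (n + 1)) ^ γ) := by
            refine setLIntegral_mono'
              (measurableSet_closedBall.diff measurableSet_closedBall) fun z hz => ?_
            refine ENNReal.ofReal_le_ofReal
              (Real.rpow_le_rpow_of_nonpos (hrpos (n + 1)) ?_ hγ0.le)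
            have h' := hz.2
            simp only [mem_closedBall, not_le] at h'
            exact h'.le
        _ = ENNReal.ofReal ((r (n + 1)) ^ γ) * volume (A n) := setLIntegral_const _ _
        _ ≤ ENNReal.ofReal ((r (n + 1)) ^ γ) * (ENNReal.ofReal ((r n) ^ (d : ℝ)) * mB) := by
            gcongr
            calc volume (A n) ≤ volume (closedBall y (r n)) := measure_mono Set.diff_subset
              _ = ENNReal.ofReal ((r n) ^ (d : ℝ)) * mB := meas_cball y (hrpos n).le
    calc ∫⁻ z in closedBall y R, ENNReal.ofReal (dist z y ^ γ)
        ≤ ∫⁻ z in {y} ∪ ⋃ n, A n, ENNReal.ofReal (dist z y ^ γ) := lintegral_mono_set hcover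
      _ ≤ (∫⁻ z in {y}, ENNReal.ofReal (dist z y ^ γ)) +
            ∫⁻ z in ⋃ n, A n, ENNReal.ofReal (dist z y ^ γ) := lintegral_union_le _ _ _
      _ = ∫⁻ z in ⋃ n, A n, ENNReal.ofReal (dist z y ^ γ) := by
          rw [Measure.restrict_eq_zero.2 (meas_singleton hd y), lintegral_zero_measure, zero_add]
      _ ≤ ∑' n, ∫⁻ z in A n, ENNReal.ofReal (dist z y ^ γ) := lintegral_iUnion_le _ _
      _ ≤ ∑' n, ENNReal.ofReal ((r (n + 1)) ^ γ) * (ENNReal.ofReal ((r n) ^ (d : ℝ)) * mB) :=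
          ENNReal.tsum_le_tsum hterm
      _ = ∑' n, (ENNReal.ofReal (R ^ (γ + (d : ℝ)) * ((1 : ℝ) / 2) ^ γ) *
            (ENNReal.ofReal (((1 : ℝ) / 2) ^ (γ + (d : ℝ)))) ^ n) * mB := by
          refine tsum_congr fun n => ?_
          rw [← mul_assoc, ← ENNReal.ofReal_mul (Real.rpow_nonneg (hrpos _).le _), key n,
            ENNReal.ofReal_mul (by positivity), ENNReal.ofReal_pow (by positivity)]
      _ = ENNReal.ofReal (R ^ (γ + (d : ℝ)) * ((1 : ℝ) / 2) ^ γ) * (1 - q)⁻¹ * mB := by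
          rw [ENNReal.tsum_mul_right, ENNReal.tsum_mul_left, ENNReal.tsum_geometric]
      _ = ENNReal.ofReal (((1 : ℝ) / 2) ^ γ) * (1 - q)⁻¹ * mB *
            ENNReal.ofReal (R ^ (γ + (d : ℝ))) := by
          rw [ENNReal.ofReal_mul (by positivity)]; ring

/-- Tail integral of `dist z y ^ γ`, `γ + d < 0`. -/
lemma lint_tail (hd : 1 ≤ d) {γ : ℝ} (hγ : γ + (d : ℝ) < 0) :
    ∃ C : ℝ≥0∞, C ≠ ⊤ ∧ ∀ ρ : ℝ, 0 < ρ → ∀ y : E,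
      ∫⁻ z in (ball y ρ)ᶜ, ENNReal.ofReal (dist z y ^ γ) ≤
        C * ENNReal.ofReal (ρ ^ (γ + d)) := by
  have hd0 : (0 : ℝ) ≤ d := Nat.cast_nonneg d
  have hγ0 : γ < 0 := by linarith
  have h2 : (0 : ℝ) < 2 := two_pos
  have hq1 : (2 : ℝ) ^ (γ + (d : ℝ)) < 1 := Real.rpow_lt_one_of_one_lt_of_neg one_lt_two hγ
  set mB := volume (ball (0 : E) 1) with hmB
  set q : ℝ≥0∞ := ENNReal.ofReal ((2 : ℝ) ^ (γ + (d : ℝ))) with hqdef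
  have hqlt : q < 1 := by
    rw [hqdef, ← ENNReal.ofReal_one]
    exact (ENNReal.ofReal_lt_ofReal_iff_of_nonneg (by positivity)).2 hq1
  have hinv : (1 - q)⁻¹ ≠ ⊤ := by
    rw [ENNReal.inv_ne_top, ne_eq, tsub_eq_zero_iff_le, not_le]
    exact hqlt
  refine ⟨ENNReal.ofReal ((2 : ℝ) ^ (d : ℝ)) * (1 - q)⁻¹ * mB,
    ENNReal.mul_ne_top (ENNReal.mul_ne_top ENNReal.ofReal_ne_top hinv)
      measure_ball_lt_top.ne, fun ρ hρ y => ?_⟩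
  set r : ℕ → ℝ := fun n => ρ * 2 ^ n with hr
  have hrpos : ∀ n, 0 < r n := fun n => by positivity
  set A : ℕ → Set E := fun n => closedBall y (r (n + 1)) \ ball y (r n) with hA
  have hcover : (ball y ρ)ᶜ ⊆ ⋃ n, A n := by
    intro z hz
    have hge : ρ ≤ dist z y := by
      simpa [mem_ball, not_lt] using hz
    have hex : ∃ n : ℕ, dist z y < r (n + 1) := by
      obtain ⟨n, hn⟩ := pow_unbounded_of_one_lt (dist z y / ρ) one_lt_two
      refine ⟨n, ?_⟩
      have h1 := (div_lt_iff₀ hρ).1 hn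
      have h2n : (2 : ℝ) ^ n ≤ 2 ^ (n + 1) := by
        apply pow_le_pow_right₀ (by norm_num); omega
      simp only [hr]
      nlinarith
    set n₀ := Nat.find hex with hn₀
    refine Set.mem_iUnion.2 ⟨n₀, mem_closedBall.2 (Nat.find_spec hex).le, ?_⟩
    simp only [mem_ball, not_lt]
    rcases Nat.eq_zero_or_pos n₀ with h0 | h0
    · rw [h0]; simpa [hr] using hge
    · obtain ⟨m, hm⟩ := Nat.exists_eq_succ_of_ne_zero h0.ne'
      have hmin := Nat.find_min hex (m := m) (by omega)
      push_neg at hmin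
      rw [hm]; exact hmin
  have c1 : ∀ (m : ℕ) (e : ℝ), (r m) ^ e = ρ ^ e * (2 : ℝ) ^ ((m : ℝ) * e) := by
    intro m e
    simp only [hr]; rw [← Real.rpow_natCast (2 : ℝ) m,
      Real.mul_rpow hρ.le (Real.rpow_nonneg h2.le _), ← Real.rpow_mul h2.le]
  have merge : ∀ s t : ℝ, (2 : ℝ) ^ s * (2 : ℝ) ^ t = (2 : ℝ) ^ (s + t) :=
    fun s t => (Real.rpow_add h2 s t).symm
  have key : ∀ n : ℕ, (r n) ^ γ * (r (n + 1)) ^ (d : ℝ) =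
      (ρ ^ (γ + (d : ℝ)) * (2 : ℝ) ^ (d : ℝ)) * ((2 : ℝ) ^ (γ + (d : ℝ))) ^ n := by
    intro n
    have c2 : ((2 : ℝ) ^ (γ + (d : ℝ))) ^ n = (2 : ℝ) ^ ((γ + (d : ℝ)) * n) := by
      rw [← Real.rpow_natCast ((2 : ℝ) ^ (γ + (d : ℝ))) n, ← Real.rpow_mul h2.le]
    rw [c1, c1, c2, Real.rpow_add hρ]
    calc ρ ^ γ * (2 : ℝ) ^ ((n : ℝ) * γ) * (ρ ^ (d : ℝ) * (2 : ℝ) ^ ((↑(n + 1) : ℝ) * d))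
        = (ρ ^ γ * ρ ^ (d : ℝ)) * ((2 : ℝ) ^ ((n : ℝ) * γ) * (2 : ℝ) ^ ((↑(n + 1) : ℝ) * d)) := by
          ring
      _ = (ρ ^ γ * ρ ^ (d : ℝ)) * (2 : ℝ) ^ ((n : ℝ) * γ + (↑(n + 1) : ℝ) * d) := by rw [merge]
      _ = (ρ ^ γ * ρ ^ (d : ℝ)) * (2 : ℝ) ^ ((d : ℝ) + (γ + (d : ℝ)) * (n : ℝ)) := by
          rw [show (n : ℝ) * γ + (↑(n + 1) : ℝ) * d = (d : ℝ) + (γ + (d : ℝ)) * (n : ℝ) from by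
            push_cast; ring]
      _ = ρ ^ γ * ρ ^ (d : ℝ) * (2 : ℝ) ^ (d : ℝ) * (2 : ℝ) ^ ((γ + (d : ℝ)) * (n : ℝ)) := by
          rw [← merge]; ring
  have hterm : ∀ n, ∫⁻ z in A n, ENNReal.ofReal (dist z y ^ γ) ≤
      ENNReal.ofReal ((r n) ^ γ) * (ENNReal.ofReal ((r (n + 1)) ^ (d : ℝ)) * mB) := by
    intro n
    calc ∫⁻ z in A n, ENNReal.ofReal (dist z y ^ γ)
        ≤ ∫⁻ _ in A n, ENNReal.ofReal ((r n) ^ γ) := by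
          refine setLIntegral_mono'
            (measurableSet_closedBall.diff measurableSet_ball) fun z hz => ?_
          refine ENNReal.ofReal_le_ofReal
            (Real.rpow_le_rpow_of_nonpos (hrpos n) ?_ hγ0.le)
          have h' := hz.2
          simpa [mem_ball, not_lt] using h'
      _ = ENNReal.ofReal ((r n) ^ γ) * volume (A n) := setLIntegral_const _ _
      _ ≤ ENNReal.ofReal ((r n) ^ γ) * (ENNReal.ofReal ((r (n + 1)) ^ (d : ℝ)) * mB) := by
          gcongr
          calc volume (A n) ≤ volume (closedBall y (r (n + 1))) := measure_mono Set.diff_subset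
            _ = ENNReal.ofReal ((r (n + 1)) ^ (d : ℝ)) * mB := meas_cball y (hrpos _).le
  calc ∫⁻ z in (ball y ρ)ᶜ, ENNReal.ofReal (dist z y ^ γ)
      ≤ ∫⁻ z in ⋃ n, A n, ENNReal.ofReal (dist z y ^ γ) := lintegral_mono_set hcover
    _ ≤ ∑' n, ∫⁻ z in A n, ENNReal.ofReal (dist z y ^ γ) := lintegral_iUnion_le _ _
    _ ≤ ∑' n, ENNReal.ofReal ((r n) ^ γ) * (ENNReal.ofReal ((r (n + 1)) ^ (d : ℝ)) * mB) :=
        ENNReal.tsum_le_tsum hterm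
    _ = ∑' n, (ENNReal.ofReal (ρ ^ (γ + (d : ℝ)) * (2 : ℝ) ^ (d : ℝ)) *
          (ENNReal.ofReal ((2 : ℝ) ^ (γ + (d : ℝ)))) ^ n) * mB := by
        refine tsum_congr fun n => ?_
        rw [← mul_assoc, ← ENNReal.ofReal_mul (Real.rpow_nonneg (hrpos _).le _), key n,
          ENNReal.ofReal_mul (by positivity), ENNReal.ofReal_pow (by positivity)]
    _ = ENNReal.ofReal (ρ ^ (γ + (d : ℝ)) * (2 : ℝ) ^ (d : ℝ)) * (1 - q)⁻¹ * mB := by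
        rw [ENNReal.tsum_mul_right, ENNReal.tsum_mul_left, ENNReal.tsum_geometric]
    _ = ENNReal.ofReal ((2 : ℝ) ^ (d : ℝ)) * (1 - q)⁻¹ * mB *
          ENNReal.ofReal (ρ ^ (γ + (d : ℝ))) := by
        rw [ENNReal.ofReal_mul (by positivity)]; ring

/-- Half of the two-kernel lemma: on the region where `dist z y ≤ dist z w`. -/
lemma lint_half (hd : 1 ≤ d) {α β : ℝ} (hα : -(d : ℝ) < α) (hβ : -(d : ℝ) < β)
    (hαβ : -(d : ℝ) < α + β) :
    ∃ C : ℝ≥0∞, C ≠ ⊤ ∧ ∀ R : ℝ, 0 < R → ∀ y w : E, ∀ S : Set E, MeasurableSet S →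
      S ⊆ closedBall y R → S ⊆ closedBall w R → (∀ z ∈ S, dist z y ≤ dist z w) →
      ∫⁻ z in S, ENNReal.ofReal (dist z y ^ α * dist z w ^ β) ≤
        C * ENNReal.ofReal (R ^ (α + β + d)) := by
  obtain ⟨C₁, hC₁, hP₁⟩ := lint_cball hd hαβ
  obtain ⟨C₂, hC₂, hP₂⟩ := lint_cball hd hα
  refine ⟨C₁ + C₂, ENNReal.add_ne_top.2 ⟨hC₁, hC₂⟩, fun R hR y w S hSm hSy hSw hcmp => ?_⟩
  rcases le_or_gt β 0 with hβ0 | hβ0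
  · calc ∫⁻ z in S, ENNReal.ofReal (dist z y ^ α * dist z w ^ β)
        ≤ ∫⁻ z in S \ {y}, ENNReal.ofReal (dist z y ^ α * dist z w ^ β) :=
          lint_diff_singleton hd _ _ _
      _ ≤ ∫⁻ z in S \ {y}, ENNReal.ofReal (dist z y ^ (α + β)) := by
          refine setLIntegral_mono' (hSm.diff (measurableSet_singleton y)) fun z hz => ?_
          have hzy : 0 < dist z y := dist_pos.2 (by simpa using hz.2)
          refine ENNReal.ofReal_le_ofReal ?_
          calc dist z y ^ α * dist z w ^ β
              ≤ dist z y ^ α * dist z y ^ β := by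
                have h1 : dist z w ^ β ≤ dist z y ^ β :=
                  Real.rpow_le_rpow_of_nonpos hzy (hcmp z hz.1) hβ0
                exact mul_le_mul_of_nonneg_left h1 (Real.rpow_nonneg dist_nonneg _)
            _ = dist z y ^ (α + β) := (Real.rpow_add hzy α β).symm
      _ ≤ ∫⁻ z in closedBall y R, ENNReal.ofReal (dist z y ^ (α + β)) :=
          lintegral_mono_set (Set.diff_subset.trans hSy)
      _ ≤ C₁ * ENNReal.ofReal (R ^ (α + β + d)) := hP₁ R hR y
      _ ≤ (C₁ + C₂) * ENNReal.ofReal (R ^ (α + β + d)) := by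
          gcongr; exact le_self_add
  · calc ∫⁻ z in S, ENNReal.ofReal (dist z y ^ α * dist z w ^ β)
        ≤ ∫⁻ z in S, ENNReal.ofReal (R ^ β) * ENNReal.ofReal (dist z y ^ α) := by
          refine setLIntegral_mono' hSm fun z hz => ?_
          rw [← ENNReal.ofReal_mul (by positivity)]
          refine ENNReal.ofReal_le_ofReal ?_
          rw [mul_comm (R ^ β)]
          exact mul_le_mul_of_nonneg_left
            (Real.rpow_le_rpow dist_nonneg (mem_closedBall.1 (hSw hz)) hβ0.le)
            (Real.rpow_nonneg dist_nonneg _)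
      _ = ENNReal.ofReal (R ^ β) * ∫⁻ z in S, ENNReal.ofReal (dist z y ^ α) :=
          lintegral_const_mul' _ _ ENNReal.ofReal_ne_top
      _ ≤ ENNReal.ofReal (R ^ β) * (C₂ * ENNReal.ofReal (R ^ (α + d))) := by
          gcongr
          exact (lintegral_mono_set hSy).trans (hP₂ R hR y)
      _ = C₂ * ENNReal.ofReal (R ^ (α + β + d)) := by
          rw [← mul_assoc, mul_comm (ENNReal.ofReal (R ^ β)) C₂, mul_assoc,
            ← ENNReal.ofReal_mul (by positivity), ← Real.rpow_add hR,
            show β + (α + (d : ℝ)) = α + β + d from by ring]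
      _ ≤ (C₁ + C₂) * ENNReal.ofReal (R ^ (α + β + d)) := by
          gcongr; exact le_add_self

/-- Two-kernel lemma on a bounded domain. -/
lemma lint_two_kernel (hd : 1 ≤ d) {α β : ℝ} (hα : -(d : ℝ) < α) (hβ : -(d : ℝ) < β)
    (hαβ : -(d : ℝ) < α + β) :
    ∃ C : ℝ≥0∞, C ≠ ⊤ ∧ ∀ R : ℝ, 0 < R → ∀ y w : E, ∀ S : Set E, MeasurableSet S →
      S ⊆ closedBall y R → S ⊆ closedBall w R →
      ∫⁻ z in S, ENNReal.ofReal (dist z y ^ α * dist z w ^ β) ≤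
        C * ENNReal.ofReal (R ^ (α + β + d)) := by
  obtain ⟨C₁, hC₁, hH₁⟩ := lint_half hd hα hβ hαβ
  obtain ⟨C₂, hC₂, hH₂⟩ := lint_half hd hβ hα (by rw [add_comm β α]; exact hαβ)
  refine ⟨C₁ + C₂, ENNReal.add_ne_top.2 ⟨hC₁, hC₂⟩, fun R hR y w S hSm hSy hSw => ?_⟩
  set S₁ := S ∩ {z : E | dist z y ≤ dist z w} with hS₁
  set S₂ := S ∩ {z : E | dist z w ≤ dist z y} with hS₂
  have hmle : MeasurableSet {z : E | dist z y ≤ dist z w} :=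
    measurableSet_le (measurable_id.dist measurable_const) (measurable_id.dist measurable_const)
  have hmle' : MeasurableSet {z : E | dist z w ≤ dist z y} :=
    measurableSet_le (measurable_id.dist measurable_const) (measurable_id.dist measurable_const)
  calc ∫⁻ z in S, ENNReal.ofReal (dist z y ^ α * dist z w ^ β)
      ≤ ∫⁻ z in S₁ ∪ S₂, ENNReal.ofReal (dist z y ^ α * dist z w ^ β) := by
        refine lintegral_mono_set fun z hz => ?_
        rcases le_total (dist z y) (dist z w) with h | h
        · exact Or.inl ⟨hz, h⟩
        · exact Or.inr ⟨hz, h⟩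
    _ ≤ (∫⁻ z in S₁, ENNReal.ofReal (dist z y ^ α * dist z w ^ β)) +
          ∫⁻ z in S₂, ENNReal.ofReal (dist z y ^ α * dist z w ^ β) := lintegral_union_le _ _ _
    _ ≤ C₁ * ENNReal.ofReal (R ^ (α + β + d)) + C₂ * ENNReal.ofReal (R ^ (α + β + d)) := by
        refine add_le_add ?_ ?_
        · exact hH₁ R hR y w S₁ (hSm.inter hmle)
            ((Set.inter_subset_left).trans hSy) ((Set.inter_subset_left).trans hSw)
            (fun z hz => hz.2)
        · have : ∫⁻ z in S₂, ENNReal.ofReal (dist z y ^ α * dist z w ^ β) =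
              ∫⁻ z in S₂, ENNReal.ofReal (dist z w ^ β * dist z y ^ α) :=
            lintegral_congr fun z => by rw [mul_comm]
          rw [this, show α + β + (d : ℝ) = β + α + d from by ring]
          exact hH₂ R hR w y S₂ (hSm.inter hmle')
            ((Set.inter_subset_left).trans hSw) ((Set.inter_subset_left).trans hSy)
            (fun z hz => hz.2)
    _ = (C₁ + C₂) * ENNReal.ofReal (R ^ (α + β + d)) := (add_mul _ _ _).symm

/-- Riesz composition bound when the total exponent is negative. -/
lemma lint_riesz_comp (hd : 1 ≤ d) {γ₁ γ₂ : ℝ} (h1 : -(d : ℝ) < γ₁) (h2 : -(d : ℝ) < γ₂)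
    (hs : γ₁ + γ₂ + (d : ℝ) < 0) :
    ∃ C : ℝ≥0∞, C ≠ ⊤ ∧ ∀ y w : E, y ≠ w →
      ∫⁻ z, ENNReal.ofReal (dist z y ^ γ₁ * dist z w ^ γ₂) ≤
        C * ENNReal.ofReal (dist y w ^ (γ₁ + γ₂ + d)) := by
  have hd0 : (0 : ℝ) ≤ d := Nat.cast_nonneg d
  have hγ₁0 : γ₁ < 0 := by linarith
  have hγ₂0 : γ₂ < 0 := by linarith
  obtain ⟨C₁, hC₁, hP₁⟩ := lint_cball hd h1
  obtain ⟨C₂, hC₂, hP₂⟩ := lint_cball hd h2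
  obtain ⟨C₃, hC₃, hT⟩ := lint_tail hd (show γ₁ + γ₂ + (d : ℝ) < 0 from hs)
  set s := γ₁ + γ₂ + (d : ℝ) with hsdef
  have hhalf : (0 : ℝ) < 1 / 2 := by norm_num
  set K₁ := C₁ * ENNReal.ofReal (((1 : ℝ) / 2) ^ s) with hK₁
  set K₂ := C₂ * ENNReal.ofReal (((1 : ℝ) / 2) ^ s) with hK₂
  set K₃ := ENNReal.ofReal ((3 : ℝ) ^ (-γ₂)) * C₃ * ENNReal.ofReal (((1 : ℝ) / 2) ^ s) with hK₃
  refine ⟨K₁ + K₂ + K₃, by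
    refine ENNReal.add_ne_top.2 ⟨ENNReal.add_ne_top.2 ⟨?_, ?_⟩, ?_⟩
    · exact ENNReal.mul_ne_top hC₁ ENNReal.ofReal_ne_top
    · exact ENNReal.mul_ne_top hC₂ ENNReal.ofReal_ne_top
    · exact ENNReal.mul_ne_top (ENNReal.mul_ne_top ENNReal.ofReal_ne_top hC₃)
        ENNReal.ofReal_ne_top, fun y w hyw => ?_⟩
  set r := dist y w with hrdef
  have hr : 0 < r := dist_pos.2 hyw
  set ρ := r / 2 with hρdef
  have hρ : 0 < ρ := by positivity
  have hρs : ENNReal.ofReal (ρ ^ s) = ENNReal.ofReal (((1 : ℝ) / 2) ^ s) *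
      ENNReal.ofReal (r ^ s) := by
    rw [← ENNReal.ofReal_mul (by positivity)]
    congr 1
    rw [show ρ = r * (1 / 2 : ℝ) from by rw [hρdef]; ring,
      Real.mul_rpow hr.le hhalf.le]
    ring
  have hcover : (Set.univ : Set E) ⊆
      closedBall y ρ ∪ (closedBall w ρ ∪ (ball y ρ ∪ ball w ρ)ᶜ) := by
    intro z _
    by_cases hzy : z ∈ ball y ρ
    · exact Or.inl (ball_subset_closedBall hzy)
    by_cases hzw : z ∈ ball w ρ
    · exact Or.inr (Or.inl (ball_subset_closedBall hzw))
    · exact Or.inr (Or.inr (by simp [hzy, hzw]))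
  have piece1 : ∫⁻ z in closedBall y ρ, ENNReal.ofReal (dist z y ^ γ₁ * dist z w ^ γ₂) ≤
      K₁ * ENNReal.ofReal (r ^ s) := by
    calc ∫⁻ z in closedBall y ρ, ENNReal.ofReal (dist z y ^ γ₁ * dist z w ^ γ₂)
        ≤ ∫⁻ z in closedBall y ρ, ENNReal.ofReal (ρ ^ γ₂) * ENNReal.ofReal (dist z y ^ γ₁) := by
          refine setLIntegral_mono' measurableSet_closedBall fun z hz => ?_
          rw [← ENNReal.ofReal_mul (by positivity)]
          refine ENNReal.ofReal_le_ofReal ?_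
          have hzw : ρ ≤ dist z w := by
            have htri : r ≤ dist y z + dist z w := dist_triangle y z w
            have hzy : dist z y ≤ ρ := mem_closedBall.1 hz
            rw [dist_comm y z] at htri
            rw [hρdef] at hzy ⊢
            linarith
          rw [mul_comm (ρ ^ γ₂)]
          exact mul_le_mul_of_nonneg_left
            (Real.rpow_le_rpow_of_nonpos hρ hzw hγ₂0.le)
            (Real.rpow_nonneg dist_nonneg _)
      _ = ENNReal.ofReal (ρ ^ γ₂) * ∫⁻ z in closedBall y ρ, ENNReal.ofReal (dist z y ^ γ₁) :=
          lintegral_const_mul' _ _ ENNReal.ofReal_ne_top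
      _ ≤ ENNReal.ofReal (ρ ^ γ₂) * (C₁ * ENNReal.ofReal (ρ ^ (γ₁ + d))) := by
          gcongr
          exact hP₁ ρ hρ y
      _ = C₁ * ENNReal.ofReal (ρ ^ s) := by
          rw [← mul_assoc, mul_comm (ENNReal.ofReal (ρ ^ γ₂)) C₁, mul_assoc,
            ← ENNReal.ofReal_mul (by positivity), ← Real.rpow_add hρ,
            show γ₂ + (γ₁ + (d : ℝ)) = s from by rw [hsdef]; ring]
      _ = K₁ * ENNReal.ofReal (r ^ s) := by rw [hρs, hK₁]; ring
  have piece2 : ∫⁻ z in closedBall w ρ, ENNReal.ofReal (dist z y ^ γ₁ * dist z w ^ γ₂) ≤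
      K₂ * ENNReal.ofReal (r ^ s) := by
    calc ∫⁻ z in closedBall w ρ, ENNReal.ofReal (dist z y ^ γ₁ * dist z w ^ γ₂)
        ≤ ∫⁻ z in closedBall w ρ, ENNReal.ofReal (ρ ^ γ₁) * ENNReal.ofReal (dist z w ^ γ₂) := by
          refine setLIntegral_mono' measurableSet_closedBall fun z hz => ?_
          rw [← ENNReal.ofReal_mul (by positivity)]
          refine ENNReal.ofReal_le_ofReal ?_
          have hzy : ρ ≤ dist z y := by
            have htri : r ≤ dist y z + dist z w := dist_triangle y z w
            have hzw : dist z w ≤ ρ := mem_closedBall.1 hz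
            rw [dist_comm y z] at htri
            rw [hρdef] at hzw ⊢
            linarith
          exact mul_le_mul_of_nonneg_right
            (Real.rpow_le_rpow_of_nonpos hρ hzy hγ₁0.le)
            (Real.rpow_nonneg dist_nonneg _)
      _ = ENNReal.ofReal (ρ ^ γ₁) * ∫⁻ z in closedBall w ρ, ENNReal.ofReal (dist z w ^ γ₂) :=
          lintegral_const_mul' _ _ ENNReal.ofReal_ne_top
      _ ≤ ENNReal.ofReal (ρ ^ γ₁) * (C₂ * ENNReal.ofReal (ρ ^ (γ₂ + d))) := by
          gcongr
          exact hP₂ ρ hρ w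
      _ = C₂ * ENNReal.ofReal (ρ ^ s) := by
          rw [← mul_assoc, mul_comm (ENNReal.ofReal (ρ ^ γ₁)) C₂, mul_assoc,
            ← ENNReal.ofReal_mul (by positivity), ← Real.rpow_add hρ,
            show γ₁ + (γ₂ + (d : ℝ)) = s from by rw [hsdef]; ring]
      _ = K₂ * ENNReal.ofReal (r ^ s) := by rw [hρs, hK₂]; ring
  have piece3 : ∫⁻ z in (ball y ρ ∪ ball w ρ)ᶜ,
      ENNReal.ofReal (dist z y ^ γ₁ * dist z w ^ γ₂) ≤ K₃ * ENNReal.ofReal (r ^ s) := by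
    calc ∫⁻ z in (ball y ρ ∪ ball w ρ)ᶜ, ENNReal.ofReal (dist z y ^ γ₁ * dist z w ^ γ₂)
        ≤ ∫⁻ z in (ball y ρ ∪ ball w ρ)ᶜ,
            ENNReal.ofReal ((3 : ℝ) ^ (-γ₂)) * ENNReal.ofReal (dist z y ^ (γ₁ + γ₂)) := by
          refine setLIntegral_mono' (measurableSet_ball.union measurableSet_ball).compl
            fun z hz => ?_
          simp only [Set.mem_compl_iff, Set.mem_union, not_or, mem_ball, not_lt] at hz
          obtain ⟨hzy, hzw⟩ := hz
          have hzy0 : 0 < dist z y := lt_of_lt_of_le hρ hzy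
          have hkey : dist z y / 3 ≤ dist z w := by
            rcases le_total (dist z y) (3 * ρ) with h | h
            · linarith
            · have htri : dist z y ≤ dist z w + dist w y := dist_triangle z w y
              have : dist w y = r := dist_comm w y ▸ rfl
              rw [this] at htri
              rw [hρdef] at h
              linarith
          rw [← ENNReal.ofReal_mul (by positivity)]
          refine ENNReal.ofReal_le_ofReal ?_
          have h1 : dist z w ^ γ₂ ≤ (dist z y / 3) ^ γ₂ :=
            Real.rpow_le_rpow_of_nonpos (by positivity) hkey hγ₂0.le
          have h2 : (dist z y / 3) ^ γ₂ = dist z y ^ γ₂ * (3 : ℝ) ^ (-γ₂) := by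
            rw [Real.div_rpow dist_nonneg (by norm_num : (0:ℝ) ≤ 3), div_eq_mul_inv,
              ← Real.rpow_neg (by norm_num : (0:ℝ) ≤ 3)]
          calc dist z y ^ γ₁ * dist z w ^ γ₂
              ≤ dist z y ^ γ₁ * (dist z y ^ γ₂ * (3 : ℝ) ^ (-γ₂)) := by
                rw [← h2]
                exact mul_le_mul_of_nonneg_left h1 (Real.rpow_nonneg dist_nonneg _)
            _ = (3 : ℝ) ^ (-γ₂) * (dist z y ^ γ₁ * dist z y ^ γ₂) := by ring
            _ = (3 : ℝ) ^ (-γ₂) * dist z y ^ (γ₁ + γ₂) := by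
                rw [← Real.rpow_add hzy0]
      _ = ENNReal.ofReal ((3 : ℝ) ^ (-γ₂)) * ∫⁻ z in (ball y ρ ∪ ball w ρ)ᶜ,
            ENNReal.ofReal (dist z y ^ (γ₁ + γ₂)) :=
          lintegral_const_mul' _ _ ENNReal.ofReal_ne_top
      _ ≤ ENNReal.ofReal ((3 : ℝ) ^ (-γ₂)) * ∫⁻ z in (ball y ρ)ᶜ,
            ENNReal.ofReal (dist z y ^ (γ₁ + γ₂)) := by
          gcongr
          exact Set.subset_union_left
      _ ≤ ENNReal.ofReal ((3 : ℝ) ^ (-γ₂)) * (C₃ * ENNReal.ofReal (ρ ^ (γ₁ + γ₂ + d))) := by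
          gcongr
          exact hT ρ hρ y
      _ = K₃ * ENNReal.ofReal (r ^ s) := by
          rw [hK₃, hρs]; ring
  calc ∫⁻ z, ENNReal.ofReal (dist z y ^ γ₁ * dist z w ^ γ₂)
      = ∫⁻ z in (Set.univ : Set E), ENNReal.ofReal (dist z y ^ γ₁ * dist z w ^ γ₂) := by
        rw [Measure.restrict_univ]
    _ ≤ ∫⁻ z in closedBall y ρ ∪ (closedBall w ρ ∪ (ball y ρ ∪ ball w ρ)ᶜ),
          ENNReal.ofReal (dist z y ^ γ₁ * dist z w ^ γ₂) := lintegral_mono_set hcover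
    _ ≤ (∫⁻ z in closedBall y ρ, ENNReal.ofReal (dist z y ^ γ₁ * dist z w ^ γ₂)) +
          ((∫⁻ z in closedBall w ρ, ENNReal.ofReal (dist z y ^ γ₁ * dist z w ^ γ₂)) +
            ∫⁻ z in (ball y ρ ∪ ball w ρ)ᶜ,
              ENNReal.ofReal (dist z y ^ γ₁ * dist z w ^ γ₂)) :=
        le_trans (lintegral_union_le _ _ _) (by gcongr; exact lintegral_union_le _ _ _)
    _ ≤ K₁ * ENNReal.ofReal (r ^ s) + (K₂ * ENNReal.ofReal (r ^ s) +
          K₃ * ENNReal.ofReal (r ^ s)) := by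
        exact add_le_add piece1 (add_le_add piece2 piece3)
    _ = (K₁ + K₂ + K₃) * ENNReal.ofReal (r ^ s) := by ring

lemma ofReal_final {I C' : ℝ≥0∞} (hC' : C' ≠ ⊤) {t : ℝ} (ht : 0 ≤ t)
    (h : I ≤ C' * ENNReal.ofReal t) : I ≤ ENNReal.ofReal ((C'.toReal + 1) * t) := by
  refine h.trans ?_
  rw [ENNReal.ofReal_mul (by positivity)]
  gcongr
  conv_lhs => rw [← ENNReal.ofReal_toReal hC']
  exact ENNReal.ofReal_le_ofReal (by linarith [ENNReal.toReal_nonneg (a := C')])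

end DblRiesz

/-- Lemma (Riesz-type double integral, case `a + ϱ + b > 0`, not `a = b = -ϱ`): there is
a constant `C = C(d,a,b,ϱ)` such that for every nonempty bounded open `D ⊂ ℝ^d` and all
`x ≠ y` in `D`,
`∫_D ∫_D |y-z|^{a-d} |z-w|^ϱ |w-x|^{b-d} dz dw ≤ C (diam D)^{a+ϱ+b}`. -/
theorem double_riesz_integral_pos (d : ℕ) (hd : 1 ≤ d) (a b ϱ : ℝ)
    (ha : 0 < a) (hb : 0 < b) (hϱ : -(d : ℝ) < ϱ) (hsum : 0 < a + ϱ + b)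
    (hne : ¬(a = -ϱ ∧ b = -ϱ)) :
    ∃ C : ℝ, 0 < C ∧
      ∀ D : Set (EuclideanSpace ℝ (Fin d)), D.Nonempty → IsOpen D →
        Bornology.IsBounded D →
        ∀ x ∈ D, ∀ y ∈ D, x ≠ y →
          (∫⁻ w in D, ∫⁻ z in D,
              ENNReal.ofReal (‖y - z‖ ^ (a - (d : ℝ)) * ‖z - w‖ ^ ϱ *
                ‖w - x‖ ^ (b - (d : ℝ)))) ≤
            ENNReal.ofReal (C * diam D ^ (a + ϱ + b)) := by
  have hd0 : (0 : ℝ) ≤ d := Nat.cast_nonneg d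
  have hd1 : (1 : ℝ) ≤ d := by exact_mod_cast hd
  rcases lt_trichotomy 0 (a + ϱ) with hcase1 | hcase0 | hcase3
  · -- Case 1 : 0 < a + ϱ
    obtain ⟨C₁, hC₁, hK⟩ := DblRiesz.lint_two_kernel hd (α := a - d) (β := ϱ)
      (by linarith) hϱ (by linarith)
    obtain ⟨C₂, hC₂, hP⟩ := DblRiesz.lint_cball hd (γ := b - d) (by linarith)
    refine ⟨(C₁ * C₂).toReal + 1, by positivity, fun D hD hDo hDb x hx y hy hxy => ?_⟩
    set R := diam D with hRdef
    have hR : 0 < R := lt_of_lt_of_le (dist_pos.2 hxy) (dist_le_diam_of_mem hDb hx hy)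
    have hsub : ∀ p ∈ D, D ⊆ closedBall p R :=
      fun p hp z hz => mem_closedBall.2 (dist_le_diam_of_mem hDb hz hp)
    have hDm := hDo.measurableSet
    apply DblRiesz.ofReal_final (ENNReal.mul_ne_top hC₁ hC₂) (Real.rpow_nonneg diam_nonneg _)
    calc (∫⁻ w in D, ∫⁻ z in D, ENNReal.ofReal (‖y - z‖ ^ (a - (d : ℝ)) * ‖z - w‖ ^ ϱ *
            ‖w - x‖ ^ (b - (d : ℝ))))
        = ∫⁻ w in D, ∫⁻ z in D, ENNReal.ofReal (dist z y ^ (a - (d : ℝ)) * dist z w ^ ϱ *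
            dist w x ^ (b - (d : ℝ))) := by
          refine lintegral_congr fun w => lintegral_congr fun z => ?_
          rw [show ‖y - z‖ = dist z y from by rw [dist_comm, dist_eq_norm],
            show ‖z - w‖ = dist z w from (dist_eq_norm z w).symm,
            show ‖w - x‖ = dist w x from (dist_eq_norm w x).symm]
      _ ≤ ∫⁻ w in D, ENNReal.ofReal (dist w x ^ (b - (d : ℝ))) *
            (C₁ * ENNReal.ofReal (R ^ (a - (d : ℝ) + ϱ + d))) := by
          refine setLIntegral_mono' hDm fun w hw => ?_
          have inner_eq : (∫⁻ z in D, ENNReal.ofReal (dist z y ^ (a - (d : ℝ)) * dist z w ^ ϱ *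
              dist w x ^ (b - (d : ℝ))))
              = ENNReal.ofReal (dist w x ^ (b - (d : ℝ))) *
                ∫⁻ z in D, ENNReal.ofReal (dist z y ^ (a - (d : ℝ)) * dist z w ^ ϱ) := by
            rw [← lintegral_const_mul' _ _ ENNReal.ofReal_ne_top]
            refine lintegral_congr fun z => ?_
            rw [← ENNReal.ofReal_mul (by positivity)]
            congr 1
            ring
          rw [inner_eq]
          gcongr
          exact hK R hR y w D hDm (hsub y hy) (hsub w hw)
      _ = (C₁ * ENNReal.ofReal (R ^ (a - (d : ℝ) + ϱ + d))) *
            ∫⁻ w in D, ENNReal.ofReal (dist w x ^ (b - (d : ℝ))) := by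
          rw [← lintegral_const_mul' _ _ (ENNReal.mul_ne_top hC₁ ENNReal.ofReal_ne_top)]
          exact lintegral_congr fun w => mul_comm _ _
      _ ≤ (C₁ * ENNReal.ofReal (R ^ (a - (d : ℝ) + ϱ + d))) *
            (C₂ * ENNReal.ofReal (R ^ (b - (d : ℝ) + d))) := by
          gcongr
          exact (lintegral_mono_set (hsub x hx)).trans (hP R hR x)
      _ = C₁ * C₂ * ENNReal.ofReal (R ^ (a + ϱ + b)) := by
          rw [mul_mul_mul_comm, ← ENNReal.ofReal_mul (by positivity), ← Real.rpow_add hR,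
            show a - (d : ℝ) + ϱ + d + (b - d + d) = a + ϱ + b from by ring]
  · -- transitional: a + ϱ = 0 or b + ϱ cases handled below
    rcases lt_trichotomy 0 (b + ϱ) with hcase2 | hcase0' | hcase3b
    · -- Case 2 : 0 < b + ϱ
      obtain ⟨C₁, hC₁, hK⟩ := DblRiesz.lint_two_kernel hd (α := ϱ) (β := b - d)
        hϱ (by linarith) (by linarith)
      obtain ⟨C₂, hC₂, hP⟩ := DblRiesz.lint_cball hd (γ := a - d) (by linarith)
      refine ⟨(C₁ * C₂).toReal + 1, by positivity, fun D hD hDo hDb x hx y hy hxy => ?_⟩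
      set R := diam D with hRdef
      have hR : 0 < R := lt_of_lt_of_le (dist_pos.2 hxy) (dist_le_diam_of_mem hDb hx hy)
      have hsub : ∀ p ∈ D, D ⊆ closedBall p R :=
        fun p hp z hz => mem_closedBall.2 (dist_le_diam_of_mem hDb hz hp)
      have hDm := hDo.measurableSet
      apply DblRiesz.ofReal_final (ENNReal.mul_ne_top hC₁ hC₂) (Real.rpow_nonneg diam_nonneg _)
      have hswap : (∫⁻ w in D, ∫⁻ z in D,
            ENNReal.ofReal (‖y - z‖ ^ (a - (d : ℝ)) * ‖z - w‖ ^ ϱ *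
              ‖w - x‖ ^ (b - (d : ℝ))))
          = ∫⁻ z in D, ∫⁻ w in D,
            ENNReal.ofReal (‖y - z‖ ^ (a - (d : ℝ)) * ‖z - w‖ ^ ϱ *
              ‖w - x‖ ^ (b - (d : ℝ))) := by
        refine lintegral_lintegral_swap (Measurable.aemeasurable ?_)
        exact ((((measurable_const.sub measurable_snd).norm.pow_const _).mul
          ((measurable_snd.sub measurable_fst).norm.pow_const _)).mul
          ((measurable_fst.sub measurable_const).norm.pow_const _)).ennreal_ofReal
      rw [hswap]
      calc (∫⁻ z in D, ∫⁻ w in D, ENNReal.ofReal (‖y - z‖ ^ (a - (d : ℝ)) * ‖z - w‖ ^ ϱ *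
              ‖w - x‖ ^ (b - (d : ℝ))))
          = ∫⁻ z in D, ∫⁻ w in D, ENNReal.ofReal (dist z y ^ (a - (d : ℝ)) *
              (dist w z ^ ϱ * dist w x ^ (b - (d : ℝ)))) := by
            refine lintegral_congr fun z => lintegral_congr fun w => ?_
            rw [show ‖y - z‖ = dist z y from by rw [dist_comm, dist_eq_norm],
              show ‖z - w‖ = dist w z from by rw [dist_comm, dist_eq_norm],
              show ‖w - x‖ = dist w x from (dist_eq_norm w x).symm, mul_assoc]
        _ ≤ ∫⁻ z in D, ENNReal.ofReal (dist z y ^ (a - (d : ℝ))) *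
              (C₁ * ENNReal.ofReal (R ^ (ϱ + (b - (d : ℝ)) + d))) := by
            refine setLIntegral_mono' hDm fun z hz => ?_
            have inner_eq : (∫⁻ w in D, ENNReal.ofReal (dist z y ^ (a - (d : ℝ)) *
                (dist w z ^ ϱ * dist w x ^ (b - (d : ℝ)))))
                = ENNReal.ofReal (dist z y ^ (a - (d : ℝ))) *
                  ∫⁻ w in D, ENNReal.ofReal (dist w z ^ ϱ * dist w x ^ (b - (d : ℝ))) := by
              rw [← lintegral_const_mul' _ _ ENNReal.ofReal_ne_top]
              refine lintegral_congr fun w => ?_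
              rw [← ENNReal.ofReal_mul (by positivity)]
            rw [inner_eq]
            gcongr
            exact hK R hR z x D hDm (hsub z hz) (hsub x hx)
        _ = (C₁ * ENNReal.ofReal (R ^ (ϱ + (b - (d : ℝ)) + d))) *
              ∫⁻ z in D, ENNReal.ofReal (dist z y ^ (a - (d : ℝ))) := by
            rw [← lintegral_const_mul' _ _ (ENNReal.mul_ne_top hC₁ ENNReal.ofReal_ne_top)]
            exact lintegral_congr fun z => mul_comm _ _
        _ ≤ (C₁ * ENNReal.ofReal (R ^ (ϱ + (b - (d : ℝ)) + d))) *
              (C₂ * ENNReal.ofReal (R ^ (a - (d : ℝ) + d))) := by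
            gcongr
            exact (lintegral_mono_set (hsub y hy)).trans (hP R hR y)
        _ = C₁ * C₂ * ENNReal.ofReal (R ^ (a + ϱ + b)) := by
            rw [mul_mul_mul_comm, ← ENNReal.ofReal_mul (by positivity), ← Real.rpow_add hR,
              show ϱ + (b - (d : ℝ)) + d + (a - d + d) = a + ϱ + b from by ring]
    · -- impossible: a + ϱ = 0 and b + ϱ = 0 contradicts hne
      exact absurd ⟨by linarith, by linarith⟩ hne
    · -- Case 3b : a + ϱ = 0, b + ϱ < 0
      obtain ⟨CQ, hCQ, hQ⟩ := DblRiesz.lint_riesz_comp hd (γ₁ := ϱ) (γ₂ := b - d)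
        hϱ (by linarith) (by linarith)
      obtain ⟨CK, hCK, hK⟩ := DblRiesz.lint_two_kernel hd (α := a - d) (β := b + ϱ)
        (by linarith) (by linarith) (by linarith)
      refine ⟨(CQ * CK).toReal + 1, by positivity, fun D hD hDo hDb x hx y hy hxy => ?_⟩
      set R := diam D with hRdef
      have hR : 0 < R := lt_of_lt_of_le (dist_pos.2 hxy) (dist_le_diam_of_mem hDb hx hy)
      have hsub : ∀ p ∈ D, D ⊆ closedBall p R :=
        fun p hp z hz => mem_closedBall.2 (dist_le_diam_of_mem hDb hz hp)
      have hDm := hDo.measurableSet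
      apply DblRiesz.ofReal_final (ENNReal.mul_ne_top hCQ hCK) (Real.rpow_nonneg diam_nonneg _)
      have hswap : (∫⁻ w in D, ∫⁻ z in D,
            ENNReal.ofReal (‖y - z‖ ^ (a - (d : ℝ)) * ‖z - w‖ ^ ϱ *
              ‖w - x‖ ^ (b - (d : ℝ))))
          = ∫⁻ z in D, ∫⁻ w in D,
            ENNReal.ofReal (‖y - z‖ ^ (a - (d : ℝ)) * ‖z - w‖ ^ ϱ *
              ‖w - x‖ ^ (b - (d : ℝ))) := by
        refine lintegral_lintegral_swap (Measurable.aemeasurable ?_)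
        exact ((((measurable_const.sub measurable_snd).norm.pow_const _).mul
          ((measurable_snd.sub measurable_fst).norm.pow_const _)).mul
          ((measurable_fst.sub measurable_const).norm.pow_const _)).ennreal_ofReal
      rw [hswap]
      calc (∫⁻ z in D, ∫⁻ w in D, ENNReal.ofReal (‖y - z‖ ^ (a - (d : ℝ)) * ‖z - w‖ ^ ϱ *
              ‖w - x‖ ^ (b - (d : ℝ))))
          = ∫⁻ z in D, ∫⁻ w in D, ENNReal.ofReal (dist z y ^ (a - (d : ℝ)) *
              (dist w z ^ ϱ * dist w x ^ (b - (d : ℝ)))) := by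
            refine lintegral_congr fun z => lintegral_congr fun w => ?_
            rw [show ‖y - z‖ = dist z y from by rw [dist_comm, dist_eq_norm],
              show ‖z - w‖ = dist w z from by rw [dist_comm, dist_eq_norm],
              show ‖w - x‖ = dist w x from (dist_eq_norm w x).symm, mul_assoc]
        _ ≤ ∫⁻ z in D \ {x}, ∫⁻ w in D, ENNReal.ofReal (dist z y ^ (a - (d : ℝ)) *
              (dist w z ^ ϱ * dist w x ^ (b - (d : ℝ)))) := DblRiesz.lint_diff_singleton hd _ _ _
        _ ≤ ∫⁻ z in D \ {x}, CQ * ENNReal.ofReal (dist z y ^ (a - (d : ℝ)) *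
              dist z x ^ (b + ϱ)) := by
            refine setLIntegral_mono' (hDm.diff (measurableSet_singleton x)) fun z hz => ?_
            have inner_eq : (∫⁻ w in D, ENNReal.ofReal (dist z y ^ (a - (d : ℝ)) *
                (dist w z ^ ϱ * dist w x ^ (b - (d : ℝ)))))
                = ENNReal.ofReal (dist z y ^ (a - (d : ℝ))) *
                  ∫⁻ w in D, ENNReal.ofReal (dist w z ^ ϱ * dist w x ^ (b - (d : ℝ))) := by
              rw [← lintegral_const_mul' _ _ ENNReal.ofReal_ne_top]
              refine lintegral_congr fun w => ?_
              rw [← ENNReal.ofReal_mul (by positivity)]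
            rw [inner_eq]
            have hzx : z ≠ x := by simpa using hz.2
            have hQ' : (∫⁻ w in D, ENNReal.ofReal (dist w z ^ ϱ * dist w x ^ (b - (d : ℝ)))) ≤
                CQ * ENNReal.ofReal (dist z x ^ (b + ϱ)) := by
              refine le_trans (setLIntegral_le_lintegral _ _) ?_
              have := hQ z x hzx
              rwa [show ϱ + (b - (d : ℝ)) + d = b + ϱ from by ring] at this
            calc ENNReal.ofReal (dist z y ^ (a - (d : ℝ))) *
                  ∫⁻ w in D, ENNReal.ofReal (dist w z ^ ϱ * dist w x ^ (b - (d : ℝ)))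
                ≤ ENNReal.ofReal (dist z y ^ (a - (d : ℝ))) *
                  (CQ * ENNReal.ofReal (dist z x ^ (b + ϱ))) := by gcongr
              _ = CQ * ENNReal.ofReal (dist z y ^ (a - (d : ℝ)) * dist z x ^ (b + ϱ)) := by
                  rw [ENNReal.ofReal_mul (by positivity)]; ring
        _ = CQ * ∫⁻ z in D \ {x}, ENNReal.ofReal (dist z y ^ (a - (d : ℝ)) *
              dist z x ^ (b + ϱ)) := lintegral_const_mul' _ _ hCQ
        _ ≤ CQ * (CK * ENNReal.ofReal (R ^ (a - (d : ℝ) + (b + ϱ) + d))) := by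
            gcongr
            exact hK R hR y x (D \ {x}) (hDm.diff (measurableSet_singleton x))
              (Set.diff_subset.trans (hsub y hy)) (Set.diff_subset.trans (hsub x hx))
        _ = CQ * CK * ENNReal.ofReal (R ^ (a + ϱ + b)) := by
            rw [show a - (d : ℝ) + (b + ϱ) + d = a + ϱ + b from by ring, mul_assoc]
  · -- Case 3a : a + ϱ < 0
    obtain ⟨CQ, hCQ, hQ⟩ := DblRiesz.lint_riesz_comp hd (γ₁ := a - d) (γ₂ := ϱ)
      (by linarith) hϱ (by linarith)
    obtain ⟨CK, hCK, hK⟩ := DblRiesz.lint_two_kernel hd (α := a + ϱ) (β := b - d)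
      (by linarith) (by linarith) (by linarith)
    refine ⟨(CQ * CK).toReal + 1, by positivity, fun D hD hDo hDb x hx y hy hxy => ?_⟩
    set R := diam D with hRdef
    have hR : 0 < R := lt_of_lt_of_le (dist_pos.2 hxy) (dist_le_diam_of_mem hDb hx hy)
    have hsub : ∀ p ∈ D, D ⊆ closedBall p R :=
      fun p hp z hz => mem_closedBall.2 (dist_le_diam_of_mem hDb hz hp)
    have hDm := hDo.measurableSet
    apply DblRiesz.ofReal_final (ENNReal.mul_ne_top hCQ hCK) (Real.rpow_nonneg diam_nonneg _)
    calc (∫⁻ w in D, ∫⁻ z in D, ENNReal.ofReal (‖y - z‖ ^ (a - (d : ℝ)) * ‖z - w‖ ^ ϱ *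
            ‖w - x‖ ^ (b - (d : ℝ))))
        = ∫⁻ w in D, ∫⁻ z in D, ENNReal.ofReal (dist z y ^ (a - (d : ℝ)) * dist z w ^ ϱ *
            dist w x ^ (b - (d : ℝ))) := by
          refine lintegral_congr fun w => lintegral_congr fun z => ?_
          rw [show ‖y - z‖ = dist z y from by rw [dist_comm, dist_eq_norm],
            show ‖z - w‖ = dist z w from (dist_eq_norm z w).symm,
            show ‖w - x‖ = dist w x from (dist_eq_norm w x).symm]
      _ ≤ ∫⁻ w in D \ {y}, ∫⁻ z in D, ENNReal.ofReal (dist z y ^ (a - (d : ℝ)) * dist z w ^ ϱ *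
            dist w x ^ (b - (d : ℝ))) := DblRiesz.lint_diff_singleton hd _ _ _
      _ ≤ ∫⁻ w in D \ {y}, CQ * ENNReal.ofReal (dist w y ^ (a + ϱ) *
            dist w x ^ (b - (d : ℝ))) := by
          refine setLIntegral_mono' (hDm.diff (measurableSet_singleton y)) fun w hw => ?_
          have inner_eq : (∫⁻ z in D, ENNReal.ofReal (dist z y ^ (a - (d : ℝ)) * dist z w ^ ϱ *
              dist w x ^ (b - (d : ℝ))))
              = ENNReal.ofReal (dist w x ^ (b - (d : ℝ))) *
                ∫⁻ z in D, ENNReal.ofReal (dist z y ^ (a - (d : ℝ)) * dist z w ^ ϱ) := by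
            rw [← lintegral_const_mul' _ _ ENNReal.ofReal_ne_top]
            refine lintegral_congr fun z => ?_
            rw [← ENNReal.ofReal_mul (by positivity)]
            congr 1
            ring
          rw [inner_eq]
          have hwy : y ≠ w := by
            have : w ≠ y := by simpa using hw.2
            exact this.symm
          have hQ' : (∫⁻ z in D, ENNReal.ofReal (dist z y ^ (a - (d : ℝ)) * dist z w ^ ϱ)) ≤
              CQ * ENNReal.ofReal (dist w y ^ (a + ϱ)) := by
            refine le_trans (setLIntegral_le_lintegral _ _) ?_
            have := hQ y w hwy
            rwa [show a - (d : ℝ) + ϱ + d = a + ϱ from by ring, dist_comm y w] at this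
          calc ENNReal.ofReal (dist w x ^ (b - (d : ℝ))) *
                ∫⁻ z in D, ENNReal.ofReal (dist z y ^ (a - (d : ℝ)) * dist z w ^ ϱ)
              ≤ ENNReal.ofReal (dist w x ^ (b - (d : ℝ))) *
                (CQ * ENNReal.ofReal (dist w y ^ (a + ϱ))) := by gcongr
            _ = CQ * ENNReal.ofReal (dist w y ^ (a + ϱ) * dist w x ^ (b - (d : ℝ))) := by
                rw [ENNReal.ofReal_mul (by positivity)]; ring
      _ = CQ * ∫⁻ w in D \ {y}, ENNReal.ofReal (dist w y ^ (a + ϱ) *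
            dist w x ^ (b - (d : ℝ))) := lintegral_const_mul' _ _ hCQ
      _ ≤ CQ * (CK * ENNReal.ofReal (R ^ (a + ϱ + (b - (d : ℝ)) + d))) := by
          gcongr
          exact hK R hR y x (D \ {y}) (hDm.diff (measurableSet_singleton y))
            (Set.diff_subset.trans (hsub y hy)) (Set.diff_subset.trans (hsub x hx))
      _ = CQ * CK * ENNReal.ofReal (R ^ (a + ϱ + b)) := by
          rw [show a + ϱ + (b - (d : ℝ)) + d = a + ϱ + b from by ring, mul_assoc]
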